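/- A ΔY transformation performed on a triangle of a 3-regular 3-vertex-connected simple graph with more than 4 vertices yields a 3-regular 3-vertex-connected simple graph. -/

import Mathlib

/-!
`G'` is `G` with the triangle contracted to `w`. A vertex off the triangle sees at most one of
`a, b, c` (as `a', b', c'` are distinct), so contraction keeps its three neighbours apart and `G'`
is cubic.

For 3-connectivity, let `s` be a set of at most two vertices of `G'` and `X` a nonempty set of
vertices of `G' - s` closed under adjacency. If `w ∉ s`, the preimage of `X` under the
contraction is closed in `G - s`, hence all of it as `G` is 3-connected. If `w ∈ s`, then `X` or
its complement, say `X`, contains at most one of `a', b', c'`. Deleting that vertex together with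
`s ∖ {w}` from `G` would cut the rest of `X` off from the triangle, so `X` is that single vertex;
but then its three neighbours in `G'` all lie in `s`.
-/

/-- `G` is `k`-vertex-connected: `|V| > k` and removing fewer than `k` vertices
never disconnects it. -/
def KVertexConnected {V : Type*} [Fintype V] (G : SimpleGraph V) (k : ℕ) : Prop :=
  k < Fintype.card V ∧
    ∀ s : Finset V, s.card < k → (G.induce ((↑s : Set V)ᶜ)).Connected

/-- The ΔY transformation: the triangle `a, b, c` (with outside neighbors
`a', b', c'`) is replaced by a single new vertex adjacent to `a', b', c'`.
We model the resulting graph on the vertex set `V ∖ {b, c}`, the vertex `a`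
playing the role of the new vertex `w`. -/
def deltaY {V : Type*} (G : SimpleGraph V) (a b c a' b' c' : V) :
    SimpleGraph {x : V // x ≠ b ∧ x ≠ c} where
  Adj x y := x ≠ y ∧
    ((x.1 ≠ a ∧ y.1 ≠ a ∧ G.Adj x.1 y.1) ∨
     (x.1 = a ∧ (y.1 = a' ∨ y.1 = b' ∨ y.1 = c')) ∨
     (y.1 = a ∧ (x.1 = a' ∨ x.1 = b' ∨ x.1 = c')))
  symm := by
    constructor
    rintro x y ⟨hne, h⟩
    refine ⟨fun h' => hne h'.symm, ?_⟩
    rcases h with ⟨h1, h2, h3⟩ | h | h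
    · exact Or.inl ⟨h2, h1, h3.symm⟩
    · exact Or.inr (Or.inr h)
    · exact Or.inr (Or.inl h)
  loopless := by constructor; rintro x ⟨hne, -⟩; exact hne rfl

namespace SimpleGraph

variable {V : Type*} {G : SimpleGraph V}

theorem induce_connected_iff_forall_closed {U : Set V} :
    (G.induce U).Connected ↔ U.Nonempty ∧
      ∀ X ⊆ U, X.Nonempty → (∀ u ∈ X, ∀ v ∈ U, G.Adj u v → v ∈ X) → U ⊆ X := by
  refine ⟨fun hconn => ⟨?_, fun X hXU ⟨x, hx⟩ hcl y hy => by_contra fun hyX => ?_⟩,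
    fun ⟨⟨x, hx⟩, hcl⟩ => ?_⟩
  · obtain ⟨⟨v, hv⟩⟩ := hconn.nonempty
    exact ⟨v, hv⟩
  · obtain ⟨p⟩ := hconn.preconnected ⟨x, hXU hx⟩ ⟨y, hy⟩
    obtain ⟨d, -, hd₁, hd₂⟩ := p.exists_boundary_dart {z | z.1 ∈ X} hx hyX
    exact hd₂ (hcl _ hd₁ _ d.snd.2 d.adj)
  · rw [connected_iff_exists_forall_reachable]
    refine ⟨⟨x, hx⟩, fun ⟨y, hy⟩ => ?_⟩
    obtain ⟨_, hreach⟩ := hcl {z | ∃ hz : z ∈ U, (G.induce U).Reachable ⟨x, hx⟩ ⟨z, hz⟩}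
      (fun z hz => hz.1) ⟨x, hx, .rfl⟩
      (fun u ⟨hu, hxu⟩ v hv huv => ⟨hv, hxu.trans (Adj.reachable (by simpa using huv))⟩)
      hy
    exact hreach

theorem ncard_neighborSet_lt_card [Finite V] (v : V) : (G.neighborSet v).ncard < Nat.card V :=
  Set.ncard_lt_card fun h => G.irrefl (h ▸ Set.mem_univ v : v ∈ G.neighborSet v)

theorem adj_iff_of_ncard_neighborSet_eq_three {v x y z : V}
    (h : (G.neighborSet v).ncard = 3) (hx : G.Adj v x) (hy : G.Adj v y) (hz : G.Adj v z)
    (hxy : x ≠ y) (hxz : x ≠ z) (hyz : y ≠ z) (w : V) :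
    G.Adj v w ↔ w = x ∨ w = y ∨ w = z := by
  have hsub : ({x, y, z} : Set V) ⊆ G.neighborSet v := by
    rintro w (rfl | rfl | rfl) <;> assumption
  have heq := Set.eq_of_subset_of_ncard_le hsub
    (by rw [h, Set.ncard_eq_three.mpr ⟨x, y, z, hxy, hxz, hyz, rfl⟩])
    (Set.finite_of_ncard_ne_zero (by omega))
  rw [← mem_neighborSet, ← heq]
  simp

theorem neighborSet_subset_compl_of_closed {U X : Set V}
    (hcl : ∀ u ∈ X, ∀ v ∈ U, G.Adj u v → v ∈ X) (hX : X.Subsingleton) {p : V} (hp : p ∈ X) :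
    G.neighborSet p ⊆ Uᶜ :=
  fun v hv hvU => G.irrefl (hX hp (hcl p hp v hvU hv) ▸ hv : G.Adj p p)

end SimpleGraph

theorem KVertexConnected.compl_subset_of_closed {V : Type*} [Fintype V] {G : SimpleGraph V}
    {k : ℕ} (h : KVertexConnected G k) {T X : Set V} (hT : T.ncard < k) (hXT : Disjoint X T)
    (hX : X.Nonempty) (hcl : ∀ u ∈ X, ∀ v ∉ T, G.Adj u v → v ∈ X) : Tᶜ ⊆ X := by
  have hconn := h.2 (Set.toFinite T).toFinset (by rwa [← Set.ncard_eq_toFinset_card])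
  rw [Set.Finite.coe_toFinset, SimpleGraph.induce_connected_iff_forall_closed] at hconn
  exact hconn.2 X hXT.subset_compl_right hX hcl

section DeltaY

variable {V : Type*} {G : SimpleGraph V} {a b c a' b' c' : V}

theorem deltaY_adj {x y : {x : V // x ≠ b ∧ x ≠ c}} :
    (deltaY G a b c a' b' c').Adj x y ↔ x ≠ y ∧
      ((x.1 ≠ a ∧ y.1 ≠ a ∧ G.Adj x.1 y.1) ∨
       (x.1 = a ∧ (y.1 = a' ∨ y.1 = b' ∨ y.1 = c')) ∨
       (y.1 = a ∧ (x.1 = a' ∨ x.1 = b' ∨ x.1 = c'))) :=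
  Iff.rfl

structure IsCubicTriangle (G : SimpleGraph V) (a b c a' b' c' : V) : Prop where
  adj_a_iff : ∀ v, G.Adj a v ↔ v = b ∨ v = c ∨ v = a'
  adj_b_iff : ∀ v, G.Adj b v ↔ v = a ∨ v = c ∨ v = b'
  adj_c_iff : ∀ v, G.Adj c v ↔ v = a ∨ v = b ∨ v = c'
  ne_a' : a' ≠ a ∧ a' ≠ b ∧ a' ≠ c
  ne_b' : b' ≠ a ∧ b' ≠ b ∧ b' ≠ c
  ne_c' : c' ≠ a ∧ c' ≠ b ∧ c' ≠ c
  pairwise_ne : a' ≠ b' ∧ a' ≠ c' ∧ b' ≠ c'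

namespace IsCubicTriangle

theorem of_regular (hreg : ∀ v : V, (G.neighborSet v).ncard = 3)
    (hab : G.Adj a b) (hbc : G.Adj b c) (hac : G.Adj a c)
    (haa' : G.Adj a a') (hbb' : G.Adj b b') (hcc' : G.Adj c c')
    (ha' : a' ≠ a ∧ a' ≠ b ∧ a' ≠ c) (hb' : b' ≠ a ∧ b' ≠ b ∧ b' ≠ c)
    (hc' : c' ≠ a ∧ c' ≠ b ∧ c' ≠ c) (hdist : a' ≠ b' ∧ a' ≠ c' ∧ b' ≠ c') :
    IsCubicTriangle G a b c a' b' c' where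
  adj_a_iff := G.adj_iff_of_ncard_neighborSet_eq_three (hreg a) hab hac haa' hbc.ne
    ha'.2.1.symm ha'.2.2.symm
  adj_b_iff := G.adj_iff_of_ncard_neighborSet_eq_three (hreg b) hab.symm hbc hbb' hac.ne
    hb'.1.symm hb'.2.2.symm
  adj_c_iff := G.adj_iff_of_ncard_neighborSet_eq_three (hreg c) hac.symm hbc.symm hcc' hab.ne
    hc'.1.symm hc'.2.1.symm
  ne_a' := ha'
  ne_b' := hb'
  ne_c' := hc'
  pairwise_ne := hdist

section

variable (hT : IsCubicTriangle G a b c a' b' c')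

/-- The new vertex `w` of the ΔY transformation. -/
def center : {x : V // x ≠ b ∧ x ≠ c} :=
  ⟨a, ((hT.adj_a_iff b).2 (Or.inl rfl)).ne, ((hT.adj_a_iff c).2 (Or.inr (Or.inl rfl))).ne⟩

theorem image_val_deltaY_neighborSet_center :
    Subtype.val '' (deltaY G a b c a' b' c').neighborSet hT.center = {a', b', c'} := by
  ext v
  have := hT.ne_a'
  have := hT.ne_b'
  have := hT.ne_c'
  simp only [Set.mem_image, SimpleGraph.mem_neighborSet, deltaY_adj, center, Set.mem_insert_iff,
    Set.mem_singleton_iff]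
  constructor
  · grind
  · intro hv
    exact ⟨⟨v, by grind⟩, by grind⟩

variable [DecidableEq V]

def contract (v : V) : {x : V // x ≠ b ∧ x ≠ c} :=
  if hv : v ≠ b ∧ v ≠ c then ⟨v, hv⟩ else hT.center

theorem contract_of_ne {v : V} (hv : v ≠ b ∧ v ≠ c) : hT.contract v = ⟨v, hv⟩ :=
  dif_pos hv

theorem contract_eq_center {v : V} (hv : ¬(v ≠ b ∧ v ≠ c)) : hT.contract v = hT.center :=
  dif_neg hv

theorem contract_val (x : {x : V // x ≠ b ∧ x ≠ c}) : hT.contract x.1 = x :=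
  hT.contract_of_ne x.2

theorem contract_a : hT.contract a = hT.center :=
  hT.contract_val hT.center

theorem contract_adj {u v : V} (huv : G.Adj u v) :
    hT.contract u = hT.contract v ∨
      (deltaY G a b c a' b' c').Adj (hT.contract u) (hT.contract v) := by
  by_cases heq : hT.contract u = hT.contract v
  · exact Or.inl heq
  refine Or.inr ⟨heq, ?_⟩
  unfold contract center at *
  split_ifs at * <;> grind [hT.adj_a_iff, hT.adj_b_iff, hT.adj_c_iff, SimpleGraph.Adj.symm]

theorem deltaY_neighborSet_eq_image {x : {x : V // x ≠ b ∧ x ≠ c}} (hx : x.1 ≠ a) :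
    (deltaY G a b c a' b' c').neighborSet x = hT.contract '' G.neighborSet x.1 := by
  ext y
  simp only [SimpleGraph.mem_neighborSet, Set.mem_image]
  constructor
  · rintro ⟨-, ⟨-, -, hadj⟩ | ⟨hxa, -⟩ | ⟨hya, hx'⟩⟩
    · exact ⟨y.1, hadj, hT.contract_val y⟩
    · exact absurd hxa hx
    · obtain ⟨t, ht, hct⟩ : ∃ t, G.Adj x.1 t ∧ hT.contract t = hT.center := by
        rcases hx' with h | h | h
        · exact ⟨a, h ▸ ((hT.adj_a_iff a').2 (by simp)).symm, hT.contract_a⟩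
        · exact ⟨b, h ▸ ((hT.adj_b_iff b').2 (by simp)).symm, hT.contract_eq_center (by simp)⟩
        · exact ⟨c, h ▸ ((hT.adj_c_iff c').2 (by simp)).symm, hT.contract_eq_center (by simp)⟩
      exact ⟨t, ht, hct.trans (Subtype.ext hya.symm)⟩
  · rintro ⟨v, hv, rfl⟩
    rcases hT.contract_adj hv with h | h
    · rw [hT.contract_val] at h
      by_cases hv' : v ≠ b ∧ v ≠ c
      · rw [hT.contract_of_ne hv'] at h
        exact absurd (congrArg Subtype.val h) hv.ne
      · rw [hT.contract_eq_center hv'] at h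
        exact absurd (congrArg Subtype.val h) hx
    · rwa [hT.contract_val] at h

theorem injOn_contract_neighborSet {x : V} (hxa : x ≠ a) (hxb : x ≠ b) (hxc : x ≠ c) :
    Set.InjOn hT.contract (G.neighborSet x) := by
  intro u hu v hv huv
  have := hT.pairwise_ne
  simp only [SimpleGraph.mem_neighborSet] at hu hv
  unfold contract center at huv
  split_ifs at huv <;> grind [hT.adj_a_iff, hT.adj_b_iff, hT.adj_c_iff, SimpleGraph.Adj.symm]

end

theorem ncard_outer (hT : IsCubicTriangle G a b c a' b' c') :
    ({a', b', c'} : Set V).ncard = 3 :=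
  Set.ncard_eq_three.mpr ⟨a', b', c', hT.pairwise_ne.1, hT.pairwise_ne.2.1, hT.pairwise_ne.2.2, rfl⟩

theorem deltaY_regular (hT : IsCubicTriangle G a b c a' b' c')
    (hreg : ∀ v : V, (G.neighborSet v).ncard = 3) (x : {x : V // x ≠ b ∧ x ≠ c}) :
    ((deltaY G a b c a' b' c').neighborSet x).ncard = 3 := by
  classical
  by_cases hx : x = hT.center
  · rw [hx, ← Set.ncard_image_of_injective _ Subtype.val_injective,
      hT.image_val_deltaY_neighborSet_center, hT.ncard_outer]
  · have hxa : x.1 ≠ a := fun h => hx (Subtype.ext h)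
    rw [hT.deltaY_neighborSet_eq_image hxa,
      (hT.injOn_contract_neighborSet hxa x.2.1 x.2.2).ncard_image, hreg]

theorem compl_subset_of_closed_of_center_notMem [Fintype V]
    (hT : IsCubicTriangle G a b c a' b' c') {k : ℕ} (hG : KVertexConnected G k)
    {s : Finset {x : V // x ≠ b ∧ x ≠ c}} (hs : s.card < k) (hw : hT.center ∉ s)
    {X : Set {x : V // x ≠ b ∧ x ≠ c}} (hXs : X ⊆ (↑s)ᶜ) (hX : X.Nonempty)
    (hcl : ∀ u ∈ X, ∀ v ∈ (↑s : Set _)ᶜ, (deltaY G a b c a' b' c').Adj u v → v ∈ X) :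
    (↑s : Set _)ᶜ ⊆ X := by
  classical
  set S := Subtype.val '' (s : Set {x : V // x ≠ b ∧ x ≠ c})
  have hcontract : ∀ v ∉ S, hT.contract v ∉ s := by
    intro v hv
    by_cases hv' : v ≠ b ∧ v ≠ c
    · rw [hT.contract_of_ne hv']
      exact fun h => hv ⟨_, h, rfl⟩
    · rwa [hT.contract_eq_center hv']
  obtain ⟨x, hx⟩ := hX
  have hsub : Sᶜ ⊆ hT.contract ⁻¹' X := hG.compl_subset_of_closed
    (by rwa [Set.ncard_image_of_injective _ Subtype.val_injective, Set.ncard_coe_finset])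
    (Set.disjoint_left.2 fun v hv ⟨y, hy, hyv⟩ => by
      subst hyv
      exact hXs (by rwa [Set.mem_preimage, hT.contract_val] at hv) hy)
    ⟨x.1, by rwa [Set.mem_preimage, hT.contract_val]⟩
    (fun u hu v hv huv => (hT.contract_adj huv).elim (fun h => by rwa [Set.mem_preimage, ← h])
      (hcl _ hu _ (hcontract v hv)))
  intro y hy
  have hyS : y.1 ∉ S := by
    rintro ⟨z, hz, hzy⟩
    exact hy (Subtype.ext hzy ▸ hz)
  simpa only [Set.mem_preimage, hT.contract_val] using hsub hyS

theorem image_val_subset_outer_of_closed_of_center_mem [Fintype V]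
    (hT : IsCubicTriangle G a b c a' b' c') (hG : KVertexConnected G 3)
    {s : Finset {x : V // x ≠ b ∧ x ≠ c}} (hs : s.card < 3) (hw : hT.center ∈ s)
    {X : Set {x : V // x ≠ b ∧ x ≠ c}} (hXs : X ⊆ (↑s)ᶜ)
    (hcl : ∀ u ∈ X, ∀ v ∈ (↑s : Set _)ᶜ, (deltaY G a b c a' b' c').Adj u v → v ∈ X)
    (hP : (Subtype.val '' X ∩ {a', b', c'}).ncard ≤ 1) :
    Subtype.val '' X ⊆ {a', b', c'} := by
  set S := Subtype.val '' (s : Set {x : V // x ≠ b ∧ x ≠ c})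
  set P := Subtype.val '' X ∩ {a', b', c'}
  set T := S \ {a} ∪ P
  have hTcard : T.ncard < 3 := by
    have hS : S.ncard = s.card := by
      rw [Set.ncard_image_of_injective _ Subtype.val_injective, Set.ncard_coe_finset]
    have hSa : (S \ {a}).ncard = s.card - 1 := by
      rw [Set.ncard_sdiff_singleton_of_mem (show a ∈ S from ⟨hT.center, hw, rfl⟩), hS]
    exact (Set.ncard_union_le _ _).trans_lt (by omega)
  have hXa : ∀ x ∈ X, x.1 ≠ a := fun x hx h =>
    hXs hx (by rwa [show x = hT.center from Subtype.ext h])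
  have hdisj : Disjoint (Subtype.val '' X \ P) T := by
    refine Set.disjoint_left.2 fun v ⟨⟨x, hx, hxv⟩, hvP⟩ hvT => ?_
    rcases hvT with ⟨⟨y, hy, hyv⟩, -⟩ | hvP'
    · exact hXs hx (Subtype.ext (hxv.trans hyv.symm) ▸ hy)
    · exact hvP hvP'
  have hclosed : ∀ u ∈ Subtype.val '' X \ P, ∀ v ∉ T, G.Adj u v →
      v ∈ Subtype.val '' X \ P := by
    rintro _ ⟨⟨x, hx, rfl⟩, hxP⟩ v hvT hxv
    have hvabc : v ≠ a ∧ v ≠ b ∧ v ≠ c := by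
      have := x.2
      grind [hT.adj_a_iff, hT.adj_b_iff, hT.adj_c_iff, SimpleGraph.Adj.symm]
    have hvs : (⟨v, hvabc.2⟩ : {x : V // x ≠ b ∧ x ≠ c}) ∉ s :=
      fun h => hvT (Or.inl ⟨⟨_, h, rfl⟩, hvabc.1⟩)
    have hvX := hcl x hx _ hvs
      ⟨fun h => hxv.ne (congrArg Subtype.val h), Or.inl ⟨hXa x hx, hvabc.1, hxv⟩⟩
    exact ⟨⟨_, hvX, rfl⟩, fun h => hvT (Or.inr h)⟩
  intro v hv
  by_contra hvP
  have hbT : b ∉ T := by grind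
  obtain ⟨⟨x, hx⟩, -, hxb⟩ :=
    (hG.compl_subset_of_closed hTcard hdisj ⟨v, hv, fun h => hvP h.2⟩ hclosed hbT).1
  exact hx.1 hxb

theorem one_lt_ncard_of_closed_of_center_mem [Fintype V]
    (hT : IsCubicTriangle G a b c a' b' c') (hG : KVertexConnected G 3)
    (hreg : ∀ x, ((deltaY G a b c a' b' c').neighborSet x).ncard = 3)
    {s : Finset {x : V // x ≠ b ∧ x ≠ c}} (hs : s.card < 3) (hw : hT.center ∈ s)
    {X : Set {x : V // x ≠ b ∧ x ≠ c}} (hXs : X ⊆ (↑s)ᶜ) (hX : X.Nonempty)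
    (hcl : ∀ u ∈ X, ∀ v ∈ (↑s : Set _)ᶜ, (deltaY G a b c a' b' c').Adj u v → v ∈ X) :
    1 < (Subtype.val '' X ∩ {a', b', c'}).ncard := by
  by_contra! hP
  have hXsub : X.Subsingleton := by
    rw [Set.inter_eq_left.2 (hT.image_val_subset_outer_of_closed_of_center_mem hG hs hw hXs hcl hP),
      Set.ncard_le_one_iff_subsingleton] at hP
    exact fun x hx y hy => Subtype.ext (hP ⟨x, hx, rfl⟩ ⟨y, hy, rfl⟩)
  obtain ⟨p, hp⟩ := hX
  have hN := Set.ncard_le_ncard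
    ((deltaY G a b c a' b' c').neighborSet_subset_compl_of_closed hcl hXsub hp)
  rw [compl_compl, hreg, Set.ncard_coe_finset] at hN
  omega

theorem kVertexConnected_deltaY [Fintype V] [DecidableEq V]
    (hT : IsCubicTriangle G a b c a' b' c') (hreg : ∀ v : V, (G.neighborSet v).ncard = 3)
    (hG : KVertexConnected G 3) : KVertexConnected (deltaY G a b c a' b' c') 3 := by
  have hreg' := hT.deltaY_regular hreg
  have hcard : 3 < Fintype.card {x : V // x ≠ b ∧ x ≠ c} := by
    have := (deltaY G a b c a' b' c').ncard_neighborSet_lt_card hT.center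
    rwa [hreg', Nat.card_eq_fintype_card] at this
  refine ⟨hcard, fun s hs => ?_⟩
  rw [SimpleGraph.induce_connected_iff_forall_closed]
  refine ⟨?_, fun X hXs hX hcl => ?_⟩
  · obtain ⟨x, -, hx⟩ := Finset.exists_mem_notMem_of_card_lt_card
      (hs.trans (hcard.trans_eq Finset.card_univ.symm))
    exact ⟨x, hx⟩
  by_cases hw : hT.center ∈ s
  · by_contra hsub
    set Y := (↑s : Set {x : V // x ≠ b ∧ x ≠ c})ᶜ \ X
    have hYcl : ∀ u ∈ Y, ∀ v ∈ (↑s : Set _)ᶜ, (deltaY G a b c a' b' c').Adj u v → v ∈ Y :=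
      fun u hu v hv huv => ⟨hv, fun hvX => hu.2 (hcl v hvX u hu.1 huv.symm)⟩
    have hX2 := hT.one_lt_ncard_of_closed_of_center_mem hG hreg' hs hw hXs hX hcl
    have hY2 := hT.one_lt_ncard_of_closed_of_center_mem (X := Y) hG hreg' hs hw
      Set.sdiff_subset (Set.sdiff_nonempty.2 hsub) hYcl
    have hdisj : Disjoint (Subtype.val '' X ∩ {a', b', c'}) (Subtype.val '' Y ∩ {a', b', c'}) :=
      ((Set.disjoint_image_iff Subtype.val_injective).2 Set.disjoint_sdiff_right).mono
        Set.inter_subset_left Set.inter_subset_left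
    have : (Subtype.val '' X ∩ {a', b', c'} ∪ Subtype.val '' Y ∩ {a', b', c'}).ncard ≤
        ({a', b', c'} : Set V).ncard :=
      Set.ncard_le_ncard (Set.union_subset Set.inter_subset_right Set.inter_subset_right)
    rw [Set.ncard_union_eq hdisj, hT.ncard_outer] at this
    omega
  · exact hT.compl_subset_of_closed_of_center_notMem hG hs hw hXs hX hcl

end IsCubicTriangle

end DeltaY

theorem deltaY_preserves_three_connected_general {V : Type*} [Fintype V] [DecidableEq V]
    (G : SimpleGraph V)
    (hreg : ∀ v : V, (G.neighborSet v).ncard = 3)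
    (h3vc : KVertexConnected G 3)
    (a b c a' b' c' : V)
    (hab : G.Adj a b) (hbc : G.Adj b c) (hac : G.Adj a c)
    (haa' : G.Adj a a') (hbb' : G.Adj b b') (hcc' : G.Adj c c')
    (ha' : a' ≠ a ∧ a' ≠ b ∧ a' ≠ c)
    (hb' : b' ≠ a ∧ b' ≠ b ∧ b' ≠ c)
    (hc' : c' ≠ a ∧ c' ≠ b ∧ c' ≠ c)
    (hdist : a' ≠ b' ∧ a' ≠ c' ∧ b' ≠ c') :
    (∀ x, ((deltaY G a b c a' b' c').neighborSet x).ncard = 3) ∧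
      KVertexConnected (deltaY G a b c a' b' c') 3 := by
  have hT := IsCubicTriangle.of_regular hreg hab hbc hac haa' hbb' hcc' ha' hb' hc' hdist
  exact ⟨hT.deltaY_regular hreg, hT.kVertexConnected_deltaY hreg h3vc⟩

/-- A ΔY transformation performed on a triangle of a 3-regular 3-vertex-connected
simple graph with more than 4 vertices yields a (simple) 3-regular
3-vertex-connected graph. -/
theorem deltaY_preserves_three_connected {V : Type*} [Fintype V] [DecidableEq V]
    (G : SimpleGraph V)
    (hreg : ∀ v : V, (G.neighborSet v).ncard = 3)
    (h3vc : KVertexConnected G 3)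
    (hcard : 4 < Fintype.card V)
    (a b c a' b' c' : V)
    (hab : G.Adj a b) (hbc : G.Adj b c) (hac : G.Adj a c)
    (haa' : G.Adj a a') (hbb' : G.Adj b b') (hcc' : G.Adj c c')
    (ha' : a' ≠ a ∧ a' ≠ b ∧ a' ≠ c)
    (hb' : b' ≠ a ∧ b' ≠ b ∧ b' ≠ c)
    (hc' : c' ≠ a ∧ c' ≠ b ∧ c' ≠ c)
    (hdist : a' ≠ b' ∧ a' ≠ c' ∧ b' ≠ c') :
    (∀ x, ((deltaY G a b c a' b' c').neighborSet x).ncard = 3) ∧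
      KVertexConnected (deltaY G a b c a' b' c') 3 :=
  deltaY_preserves_three_connected_general G hreg h3vc a b c a' b' c' hab hbc hac haa' hbb' hcc' ha'
    hb' hc' hdist
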